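/- For p = (x,y,z) in the simplex not a vertex, the matrix M_p restricted to the plane L = {u+v+w = 0} has two real eigenvalues λ₀(p), λ₋₁(p), both lying in the interval [-1, 0]; moreover λ₋₁(p) = -1 and λ₀(p) = 0 hold if and only if p lies on the boundary of the simplex (one coordinate zero) but is not a vertex. -/

import Mathlib

open Matrix Polynomial

noncomputable def Mp (p : Fin 3 → ℝ) : Matrix (Fin 3) (Fin 3) ℝ :=
  !![0, p 2 / (p 0 + p 2), p 1 / (p 0 + p 1);
     p 2 / (p 1 + p 2), 0, p 0 / (p 0 + p 1);
     p 1 / (p 1 + p 2), p 0 / (p 0 + p 2), 0]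

/-! The trace of `M_p` is zero and its columns sum to one, so its characteristic polynomial is
`(X - 1)(X² + X + q)` with `q = 2xyz / ((x+y)(x+z)(y+z))`. The AM-GM bound
`8xyz ≤ (x+y)(x+z)(y+z)` gives `0 ≤ q ≤ 1/4`, so the roots `(-1 ± √(1 - 4q))/2` of the
quadratic factor are real and lie in `[-1, 0]`; they are `-1` and `0` exactly when `q = 0`,
i.e. when `xyz = 0`. -/

theorem Matrix.charpoly_fin_three_of_diag_eq_zero {R : Type*} [CommRing R] (a b c d e f : R) :
    (!![0, a, b; c, 0, d; e, f, 0] : Matrix (Fin 3) (Fin 3) R).charpoly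
      = X ^ 3 - C (a * c + b * e + d * f) * X - C (a * d * e + b * c * f) := by
  rw [Matrix.charpoly, Matrix.det_fin_three]
  simp [charmatrix_apply_eq, charmatrix_apply_ne]
  ring

theorem cubic_eq_mul_of_add_eq_neg_one {R : Type*} [CommRing R] {l0 lm : R}
    (hsum : l0 + lm = -1) :
    (X ^ 3 - C (1 - l0 * lm) * X - C (l0 * lm) : R[X]) = (X - C 1) * (X - C l0) * (X - C lm) := by
  have hlm : lm = -1 - l0 := by linear_combination hsum
  subst hlm
  simp only [map_sub, map_mul, map_neg, map_one]
  ring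

/-- The product `λ₀ λ₋₁` of the two nontrivial eigenvalues of `M_p`. -/
noncomputable def eigenvalueProduct (x y z : ℝ) : ℝ :=
  2 * x * y * z / ((x + y) * (x + z) * (y + z))

theorem Mp_charpoly {x y z : ℝ} (hxy : x + y ≠ 0) (hxz : x + z ≠ 0) (hyz : y + z ≠ 0) :
    (Mp ![x, y, z]).charpoly
      = X ^ 3 - C (1 - eigenvalueProduct x y z) * X - C (eigenvalueProduct x y z) := by
  have hM : Mp ![x, y, z] = !![0, z / (x + z), y / (x + y); z / (y + z), 0, x / (x + y);
      y / (y + z), x / (x + z), 0] := by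
    simp [Mp]
  rw [hM, Matrix.charpoly_fin_three_of_diag_eq_zero, eigenvalueProduct]
  congr 4
  · field_simp
    ring
  · field_simp
    ring

theorem eigenvalueProduct_nonneg {x y z : ℝ} (hx : 0 ≤ x) (hy : 0 ≤ y) (hz : 0 ≤ z) :
    0 ≤ eigenvalueProduct x y z := by
  unfold eigenvalueProduct
  positivity

theorem eigenvalueProduct_le_quarter {x y z : ℝ} (hx : 0 ≤ x) (hy : 0 ≤ y) (hz : 0 ≤ z)
    (hxy : 0 < x + y) (hxz : 0 < x + z) (hyz : 0 < y + z) :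
    eigenvalueProduct x y z ≤ 1 / 4 := by
  rw [eigenvalueProduct, div_le_iff₀ (by positivity)]
  nlinarith [mul_nonneg hz (sq_nonneg (x - y)), mul_nonneg hy (sq_nonneg (x - z)),
    mul_nonneg hx (sq_nonneg (y - z))]

theorem eigenvalueProduct_eq_zero_iff {x y z : ℝ}
    (hxy : x + y ≠ 0) (hxz : x + z ≠ 0) (hyz : y + z ≠ 0) :
    eigenvalueProduct x y z = 0 ↔ x = 0 ∨ y = 0 ∨ z = 0 := by
  simp [eigenvalueProduct, hxy, hxz, hyz, or_assoc]

theorem exists_roots_of_add_eq_neg_one {q : ℝ} (h0 : 0 ≤ q) (h4 : q ≤ 1 / 4) :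
    ∃ l0 lm : ℝ, lm ≤ l0 ∧ l0 + lm = -1 ∧ l0 * lm = q ∧
      l0 ∈ Set.Icc (-1 : ℝ) 0 ∧ lm ∈ Set.Icc (-1 : ℝ) 0 := by
  set d := Real.sqrt (1 - 4 * q)
  have hd0 : 0 ≤ d := Real.sqrt_nonneg _
  have hd2 : d ^ 2 = 1 - 4 * q := Real.sq_sqrt (by linarith)
  have hd1 : d ≤ 1 := by nlinarith
  exact ⟨(-1 + d) / 2, (-1 - d) / 2, by linarith, by ring, by linear_combination -hd2 / 4,
    ⟨by linarith, by linarith⟩, ⟨by linarith, by linarith⟩⟩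

theorem roots_eq_neg_one_zero_iff {l0 lm : ℝ} (hle : lm ≤ l0) (hsum : l0 + lm = -1) :
    (lm = -1 ∧ l0 = 0) ↔ l0 * lm = 0 := by
  constructor
  · rintro ⟨-, rfl⟩
    exact zero_mul lm
  · intro h
    rcases mul_eq_zero.mp h with h | h <;> constructor <;> linarith

theorem stmt4 (x y z : ℝ) (hx : 0 ≤ x) (hy : 0 ≤ y) (hz : 0 ≤ z)
    (hxy : 0 < x + y) (hxz : 0 < x + z) (hyz : 0 < y + z) :
    ∃ l0 lm : ℝ, lm ≤ l0 ∧
      l0 ∈ Set.Icc (-1 : ℝ) 0 ∧ lm ∈ Set.Icc (-1 : ℝ) 0 ∧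
      (Mp ![x, y, z]).charpoly = (X - C 1) * (X - C l0) * (X - C lm) ∧
      ((lm = -1 ∧ l0 = 0) ↔ (x = 0 ∨ y = 0 ∨ z = 0)) := by
  obtain ⟨l0, lm, hle, hsum, hprod, hl0, hlm⟩ := exists_roots_of_add_eq_neg_one
    (eigenvalueProduct_nonneg hx hy hz) (eigenvalueProduct_le_quarter hx hy hz hxy hxz hyz)
  refine ⟨l0, lm, hle, hl0, hlm, ?_, ?_⟩
  · rw [Mp_charpoly hxy.ne' hxz.ne' hyz.ne', ← hprod, cubic_eq_mul_of_add_eq_neg_one hsum]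
  · rw [roots_eq_neg_one_zero_iff hle hsum, hprod,
      eigenvalueProduct_eq_zero_iff hxy.ne' hxz.ne' hyz.ne']
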